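/- arXiv:2508.17154 — 2 statements merged into one kernel-verified Lean document; each statement's English description precedes it below -/
import Mathlib

section
/- Let S = {|ψ_i⟩}_{i=0}^{n-1} be vectors in C^{d_A} ⊗ C^{d_B} with coordinates a^{(i)}_{kl} in the standard product basis. For each pair k < p in {0,…,d_A−1} and l < r in {0,…,d_B−1}, define the n×n matrix Λ_{kp|lr} with entries (Λ_{kp|lr})_{ij} = a^{(i)}_{kl} a^{(j)}_{pr} − a^{(i)}_{kr} a^{(j)}_{pl}, and for s < t in {0,…,n−1} define Γ_{st} with entries (Γ_{st})_{ij} = δ_{si}δ_{tj} − δ_{ti}δ_{sj}. If this collection of matrices spans the full space M(n,C) of n×n complex matrices, then every nonzero vector in the span of S is entangled (i.e., is not a simple tensor u ⊗ v). -/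
/-- If the product-forming matrices `Λ_{kp|lr}` together with the
symmetrization matrices `Γ_{st}` span all of `M(n, ℂ)`, then every nonzero vector
in the span of the states `ψ_i` (with coordinates `a i k l`) is entangled. -/
theorem stmt_0 (n dA dB : ℕ) (a : Fin n → Fin dA → Fin dB → ℂ)
    (h : Submodule.span ℂ
        (({M : Matrix (Fin n) (Fin n) ℂ | ∃ (k p : Fin dA) (l r : Fin dB), k < p ∧ l < r ∧
            M = fun i j => a i k l * a j p r - a i k r * a j p l} : Set (Matrix (Fin n) (Fin n) ℂ))
          ∪ {M : Matrix (Fin n) (Fin n) ℂ | ∃ s t : Fin n, s < t ∧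
            M = fun i j => (if s = i then (1 : ℂ) else 0) * (if t = j then (1 : ℂ) else 0)
              - (if t = i then (1 : ℂ) else 0) * (if s = j then (1 : ℂ) else 0)}) = ⊤) :
    ∀ x : Fin n → ℂ,
      (fun (k : Fin dA) (l : Fin dB) => ∑ i, x i * a i k l) ≠ 0 →
      ¬ ∃ (u : Fin dA → ℂ) (v : Fin dB → ℂ),
          (fun (k : Fin dA) (l : Fin dB) => ∑ i, x i * a i k l) = fun k l => u k * v l := by
  intro x hne hprod
  obtain ⟨u, v, huv⟩ := hprod
  -- the linear functional M ↦ ∑ i j, x i * x j * M i j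
  set φ : Matrix (Fin n) (Fin n) ℂ →ₗ[ℂ] ℂ :=
    { toFun := fun M => ∑ i, ∑ j, x i * x j * M i j
      map_add' := by
        intro M N
        simp [Matrix.add_apply, mul_add, Finset.sum_add_distrib]
      map_smul' := by
        intro c M
        simp [Matrix.smul_apply, Finset.mul_sum, smul_eq_mul]
        congr 1; funext i; congr 1; funext j; ring } with hφ
  have hχ : ∀ (k : Fin dA) (l : Fin dB), (∑ i, x i * a i k l) = u k * v l := by
    intro k l
    exact congrFun (congrFun huv k) l
  have hker : Submodule.span ℂ
      (({M : Matrix (Fin n) (Fin n) ℂ | ∃ (k p : Fin dA) (l r : Fin dB), k < p ∧ l < r ∧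
          M = fun i j => a i k l * a j p r - a i k r * a j p l} : Set (Matrix (Fin n) (Fin n) ℂ))
        ∪ {M : Matrix (Fin n) (Fin n) ℂ | ∃ s t : Fin n, s < t ∧
          M = fun i j => (if s = i then (1 : ℂ) else 0) * (if t = j then (1 : ℂ) else 0)
            - (if t = i then (1 : ℂ) else 0) * (if s = j then (1 : ℂ) else 0)}) ≤
      LinearMap.ker φ := by
    apply Submodule.span_le.mpr
    rintro M (⟨k, p, l, r, _, _, rfl⟩ | ⟨s, t, _, rfl⟩)
    · have key : ∀ (k p : Fin dA) (l r : Fin dB),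
          (∑ i, ∑ j, x i * x j * (a i k l * a j p r)) = (u k * v l) * (u p * v r) := by
        intro k p l r
        rw [← hχ k l, ← hχ p r, Finset.sum_mul_sum]
        apply Finset.sum_congr rfl; intro i _
        apply Finset.sum_congr rfl; intro j _
        ring
      show φ _ = 0
      show (∑ i, ∑ j, x i * x j * (a i k l * a j p r - a i k r * a j p l)) = 0
      have e1 : (∑ i, ∑ j, x i * x j * (a i k l * a j p r - a i k r * a j p l))
          = (∑ i, ∑ j, x i * x j * (a i k l * a j p r))
            - (∑ i, ∑ j, x i * x j * (a i k r * a j p l)) := by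
        rw [← Finset.sum_sub_distrib]
        apply Finset.sum_congr rfl; intro i _
        rw [← Finset.sum_sub_distrib]
        apply Finset.sum_congr rfl; intro j _
        ring
      rw [e1, key, key]
      ring
    · show φ _ = 0
      show (∑ i, ∑ j, x i * x j *
          ((if s = i then (1 : ℂ) else 0) * (if t = j then (1 : ℂ) else 0)
            - (if t = i then (1 : ℂ) else 0) * (if s = j then (1 : ℂ) else 0))) = 0
      have A : ∀ (s t : Fin n),
          (∑ i, ∑ j, x i * x j * ((if s = i then (1 : ℂ) else 0) * (if t = j then (1 : ℂ) else 0)))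
            = x s * x t := by
        intro s t
        have e : ∀ i j : Fin n, x i * x j * ((if s = i then (1 : ℂ) else 0) * (if t = j then (1 : ℂ) else 0))
            = (if s = i then x i else 0) * (if t = j then x j else 0) := by
          intro i j
          by_cases h1 : s = i <;> by_cases h2 : t = j <;> simp [h1, h2]
        simp only [e]
        rw [← Finset.sum_mul_sum]
        simp [Finset.sum_ite_eq]
      have e2 : (∑ i, ∑ j, x i * x j *
          ((if s = i then (1 : ℂ) else 0) * (if t = j then (1 : ℂ) else 0)
            - (if t = i then (1 : ℂ) else 0) * (if s = j then (1 : ℂ) else 0)))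
          = (∑ i, ∑ j, x i * x j * ((if s = i then (1 : ℂ) else 0) * (if t = j then (1 : ℂ) else 0)))
            - (∑ i, ∑ j, x i * x j * ((if t = i then (1 : ℂ) else 0) * (if s = j then (1 : ℂ) else 0))) := by
        rw [← Finset.sum_sub_distrib]
        apply Finset.sum_congr rfl; intro i _
        rw [← Finset.sum_sub_distrib]
        apply Finset.sum_congr rfl; intro j _
        ring
      rw [e2, A, A]
      ring
  have hall : ∀ M : Matrix (Fin n) (Fin n) ℂ, φ M = 0 := by
    intro M
    have hm : M ∈ Submodule.span ℂ
        (({M : Matrix (Fin n) (Fin n) ℂ | ∃ (k p : Fin dA) (l r : Fin dB), k < p ∧ l < r ∧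
            M = fun i j => a i k l * a j p r - a i k r * a j p l} : Set (Matrix (Fin n) (Fin n) ℂ))
          ∪ {M : Matrix (Fin n) (Fin n) ℂ | ∃ s t : Fin n, s < t ∧
            M = fun i j => (if s = i then (1 : ℂ) else 0) * (if t = j then (1 : ℂ) else 0)
              - (if t = i then (1 : ℂ) else 0) * (if s = j then (1 : ℂ) else 0)}) := by
      rw [h]; trivial
    exact hker hm
  have hx : ∀ i, x i = 0 := by
    intro i
    have hmi := hall (Matrix.single i i 1)
    have : (∑ i', ∑ j', x i' * x j' * Matrix.single i i (1 : ℂ) i' j') = 0 := hmi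
    rw [Finset.sum_eq_single i, Finset.sum_eq_single i] at this
    · simp [Matrix.single, mul_self_eq_zero] at this
      exact this
    · intro b _ hb
      simp [Matrix.single, hb.symm]
    · intro hb; exact absurd (Finset.mem_univ i) hb
    · intro b _ hb
      apply Finset.sum_eq_zero; intro j _
      simp [Matrix.single, hb.symm]
    · intro hb; exact absurd (Finset.mem_univ i) hb
  apply hne
  funext k l
  simp [hx]
end

section
/- The two vectors |χ_0⟩ = 2|0⟩(|00⟩+|10⟩+|01⟩) − 3(|01⟩+|10⟩)|1⟩ and |χ_1⟩ = 2|1⟩(|00⟩+|10⟩+|11⟩) − 3(|01⟩+|10⟩)|1⟩ in C^2⊗C^2⊗C^2 span the orthogonal complement of the 6-dimensional subspace spanned by {|η⟩⁻, |φ_0⟩⁻, |φ_1⟩⁻, |ψ_0⟩⁻, |ψ_1⟩⁻, |τ⟩}, and every nonzero vector in span{|χ_0⟩, |χ_1⟩} is entangled across each of the bipartitions A|BC, B|AC, and C|AB. -/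
/-- Standard basis coefficient: `ket x a = δ_{a,x}`. -/
def ket (x a : Fin 2) : ℂ := if a = x then 1 else 0

/-- `|η⟩⁻ = (|01⟩−|10⟩)|1⟩`. -/
def ηm (a b c : Fin 2) : ℂ := (ket 0 a * ket 1 b - ket 1 a * ket 0 b) * ket 1 c

/-- `|φ_i⟩⁻ = |i⟩(|00⟩−|10⟩)`. -/
def φm (i : Fin 2) (a b c : Fin 2) : ℂ :=
  ket i a * (ket 0 b * ket 0 c - ket 1 b * ket 0 c)

/-- `|ψ_0⟩⁻ = |0⟩(|00⟩+|10⟩−2|01⟩)`. -/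
def ψm0 (a b c : Fin 2) : ℂ :=
  ket 0 a * (ket 0 b * ket 0 c + ket 1 b * ket 0 c - 2 * ket 0 b * ket 1 c)

/-- `|ψ_1⟩⁻ = |1⟩(|00⟩+|10⟩−2|11⟩)`. -/
def ψm1 (a b c : Fin 2) : ℂ :=
  ket 1 a * (ket 0 b * ket 0 c + ket 1 b * ket 0 c - 2 * ket 1 b * ket 1 c)

/-- `|τ⟩ = (|0⟩+|1⟩)^{⊗3}`. -/
def τ2 (_ _ _ : Fin 2) : ℂ := 1

/-- The six biseparable states of the set `𝒰`. -/
def fam6 : Fin 6 → (Fin 2 → Fin 2 → Fin 2 → ℂ) := ![ηm, φm 0, φm 1, ψm0, ψm1, τ2]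

/-- `|χ_0⟩ = 2|0⟩(|00⟩+|10⟩+|01⟩) − 3(|01⟩+|10⟩)|1⟩`. -/
def χ0 (a b c : Fin 2) : ℂ :=
  2 * ket 0 a * (ket 0 b * ket 0 c + ket 1 b * ket 0 c + ket 0 b * ket 1 c)
    - 3 * (ket 0 a * ket 1 b + ket 1 a * ket 0 b) * ket 1 c

/-- `|χ_1⟩ = 2|1⟩(|00⟩+|10⟩+|11⟩) − 3(|01⟩+|10⟩)|1⟩`. -/
def χ1 (a b c : Fin 2) : ℂ :=
  2 * ket 1 a * (ket 0 b * ket 0 c + ket 1 b * ket 0 c + ket 1 b * ket 1 c)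
    - 3 * (ket 0 a * ket 1 b + ket 1 a * ket 0 b) * ket 1 c


private lemma solve35 (x y : ℂ) (hx : x * (3 * x + 5 * y) = 0) (hy : y * (3 * y + 5 * x) = 0) :
    x = 0 ∧ y = 0 := by
  rcases mul_eq_zero.1 hx with h | h <;> rcases mul_eq_zero.1 hy with h' | h'
  · exact ⟨h, h'⟩
  · exact ⟨h, by linear_combination (1/3 : ℂ) * h' - (5/3 : ℂ) * h⟩
  · exact ⟨by linear_combination (1/3 : ℂ) * h - (5/3 : ℂ) * h', h'⟩
  · exact ⟨by linear_combination (-(3:ℂ)/16) * h + (5/16 : ℂ) * h',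
      by linear_combination (-(3:ℂ)/16) * h' + (5/16 : ℂ) * h⟩

private lemma solve53 (x y : ℂ) (hx : x * (5 * x + 3 * y) = 0) (hy : y * (5 * y + 3 * x) = 0) :
    x = 0 ∧ y = 0 := by
  rcases mul_eq_zero.1 hx with h | h <;> rcases mul_eq_zero.1 hy with h' | h'
  · exact ⟨h, h'⟩
  · exact ⟨h, by linear_combination (1/5 : ℂ) * h' - (3/5 : ℂ) * h⟩
  · exact ⟨by linear_combination (1/5 : ℂ) * h - (3/5 : ℂ) * h', h'⟩
  · exact ⟨by linear_combination (5/16 : ℂ) * h - (3/16 : ℂ) * h',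
      by linear_combination (5/16 : ℂ) * h' - (3/16 : ℂ) * h⟩

set_option maxHeartbeats 1000000 in
/-- `χ_0, χ_1` span the orthogonal complement of the span of the six
states, and every nonzero vector in their span is entangled across each bipartition. -/
theorem stmt_10 :
    (∀ w : Fin 2 → Fin 2 → Fin 2 → ℂ,
      (∀ i : Fin 6, ∑ a : Fin 2, ∑ b : Fin 2, ∑ c : Fin 2, star (fam6 i a b c) * w a b c = 0) ↔
      ∃ x y : ℂ, ∀ a b c, w a b c = x * χ0 a b c + y * χ1 a b c) ∧
    (∀ x y : ℂ, ¬ (∀ a b c, x * χ0 a b c + y * χ1 a b c = 0) →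
      (¬ ∃ (u : Fin 2 → ℂ) (v : Fin 2 → Fin 2 → ℂ),
          ∀ a b c, x * χ0 a b c + y * χ1 a b c = u a * v b c) ∧
      (¬ ∃ (u : Fin 2 → ℂ) (v : Fin 2 → Fin 2 → ℂ),
          ∀ a b c, x * χ0 a b c + y * χ1 a b c = u b * v a c) ∧
      (¬ ∃ (u : Fin 2 → ℂ) (v : Fin 2 → Fin 2 → ℂ),
          ∀ a b c, x * χ0 a b c + y * χ1 a b c = u c * v a b)) := by
  constructor
  · intro w
    constructor
    · intro h
      have h0 : ∑ a : Fin 2, ∑ b : Fin 2, ∑ c : Fin 2, star (ηm a b c) * w a b c = 0 := h 0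
      have h1 : ∑ a : Fin 2, ∑ b : Fin 2, ∑ c : Fin 2, star (φm 0 a b c) * w a b c = 0 := h 1
      have h2 : ∑ a : Fin 2, ∑ b : Fin 2, ∑ c : Fin 2, star (φm 1 a b c) * w a b c = 0 := h 2
      have h3 : ∑ a : Fin 2, ∑ b : Fin 2, ∑ c : Fin 2, star (ψm0 a b c) * w a b c = 0 := h 3
      have h4 : ∑ a : Fin 2, ∑ b : Fin 2, ∑ c : Fin 2, star (ψm1 a b c) * w a b c = 0 := h 4
      have h5 : ∑ a : Fin 2, ∑ b : Fin 2, ∑ c : Fin 2, star (τ2 a b c) * w a b c = 0 := h 5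
      simp [Fin.sum_univ_two, ηm, φm, ψm0, ψm1, τ2, ket, map_ofNat] at h0 h1 h2 h3 h4 h5
      refine ⟨w 0 0 0 / 2, w 1 0 0 / 2, ?_⟩
      intro a b c
      fin_cases a <;> fin_cases b <;> fin_cases c <;> simp [χ0, χ1, ket] <;> (try ring_nf)
      · linear_combination (-(1:ℂ)/2) * h3 - (1/2 : ℂ) * h1
      · linear_combination -h1
      · linear_combination (1/2 : ℂ) * h5 + (1/2 : ℂ) * h0 + (3/4 : ℂ) * h1 + (3/4 : ℂ) * h2
          + (1/4 : ℂ) * h3 + (1/4 : ℂ) * h4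
      · linear_combination (1/2 : ℂ) * h5 - (1/2 : ℂ) * h0 + (3/4 : ℂ) * h1 + (3/4 : ℂ) * h2
          + (1/4 : ℂ) * h3 + (1/4 : ℂ) * h4
      · linear_combination -h2
      · linear_combination (-(1:ℂ)/2) * h4 - (1/2 : ℂ) * h2
    · rintro ⟨x, y, hw⟩ i
      have K0 : ∑ a : Fin 2, ∑ b : Fin 2, ∑ c : Fin 2, star (ηm a b c) * w a b c = 0 := by
        simp [Fin.sum_univ_two, ηm, ket, hw, χ0, χ1, map_ofNat] <;> ring
      have K1 : ∑ a : Fin 2, ∑ b : Fin 2, ∑ c : Fin 2, star (φm 0 a b c) * w a b c = 0 := by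
        simp [Fin.sum_univ_two, φm, ket, hw, χ0, χ1, map_ofNat] <;> ring
      have K2 : ∑ a : Fin 2, ∑ b : Fin 2, ∑ c : Fin 2, star (φm 1 a b c) * w a b c = 0 := by
        simp [Fin.sum_univ_two, φm, ket, hw, χ0, χ1, map_ofNat] <;> ring
      have K3 : ∑ a : Fin 2, ∑ b : Fin 2, ∑ c : Fin 2, star (ψm0 a b c) * w a b c = 0 := by
        simp [Fin.sum_univ_two, ψm0, ket, hw, χ0, χ1, map_ofNat] <;> ring
      have K4 : ∑ a : Fin 2, ∑ b : Fin 2, ∑ c : Fin 2, star (ψm1 a b c) * w a b c = 0 := by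
        simp [Fin.sum_univ_two, ψm1, ket, hw, χ0, χ1, map_ofNat] <;> ring
      have K5 : ∑ a : Fin 2, ∑ b : Fin 2, ∑ c : Fin 2, star (τ2 a b c) * w a b c = 0 := by
        simp [Fin.sum_univ_two, τ2, ket, hw, χ0, χ1, map_ofNat] <;> ring
      fin_cases i
      exacts [K0, K1, K2, K3, K4, K5]
  · intro x y hne
    have key : x = 0 → y = 0 → False := by
      intro hx hy
      exact hne fun a b c => by rw [hx, hy]; ring
    refine ⟨?_, ?_, ?_⟩
    · rintro ⟨u, v, h⟩
      have e1 : x * (3 * x + 5 * y) = 0 := by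
        have k : (x * χ0 0 0 0 + y * χ1 0 0 0) * (x * χ0 1 0 1 + y * χ1 1 0 1)
            - (x * χ0 0 0 1 + y * χ1 0 0 1) * (x * χ0 1 0 0 + y * χ1 1 0 0) = 0 := by
          rw [h 0 0 0, h 1 0 1, h 0 0 1, h 1 0 0]; ring
        simp [χ0, χ1, ket] at k
        linear_combination (-(1:ℂ)/2) * k
      have e2 : y * (3 * y + 5 * x) = 0 := by
        have k : (x * χ0 0 0 0 + y * χ1 0 0 0) * (x * χ0 1 1 1 + y * χ1 1 1 1)
            - (x * χ0 0 1 1 + y * χ1 0 1 1) * (x * χ0 1 0 0 + y * χ1 1 0 0) = 0 := by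
          rw [h 0 0 0, h 1 1 1, h 0 1 1, h 1 0 0]; ring
        simp [χ0, χ1, ket] at k
        linear_combination (1/2 : ℂ) * k
      obtain ⟨hx, hy⟩ := solve35 x y e1 e2
      exact key hx hy
    · rintro ⟨u, v, h⟩
      have e1 : x * (5 * x + 3 * y) = 0 := by
        have k : (x * χ0 0 0 0 + y * χ1 0 0 0) * (x * χ0 0 1 1 + y * χ1 0 1 1)
            - (x * χ0 0 0 1 + y * χ1 0 0 1) * (x * χ0 0 1 0 + y * χ1 0 1 0) = 0 := by
          rw [h 0 0 0, h 0 1 1, h 0 0 1, h 0 1 0]; ring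
        simp [χ0, χ1, ket] at k
        linear_combination (-(1:ℂ)/2) * k
      have e2 : y * (5 * y + 3 * x) = 0 := by
        have k : (x * χ0 1 0 0 + y * χ1 1 0 0) * (x * χ0 1 1 1 + y * χ1 1 1 1)
            - (x * χ0 1 0 1 + y * χ1 1 0 1) * (x * χ0 1 1 0 + y * χ1 1 1 0) = 0 := by
          rw [h 1 0 0, h 1 1 1, h 1 0 1, h 1 1 0]; ring
        simp [χ0, χ1, ket] at k
        linear_combination (1/2 : ℂ) * k
      obtain ⟨hx, hy⟩ := solve53 x y e1 e2
      exact key hx hy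
    · rintro ⟨u, v, h⟩
      have e1 : x * (5 * x + 3 * y) = 0 := by
        have k : (x * χ0 0 0 0 + y * χ1 0 0 0) * (x * χ0 0 1 1 + y * χ1 0 1 1)
            - (x * χ0 0 0 1 + y * χ1 0 0 1) * (x * χ0 0 1 0 + y * χ1 0 1 0) = 0 := by
          rw [h 0 0 0, h 0 1 1, h 0 0 1, h 0 1 0]; ring
        simp [χ0, χ1, ket] at k
        linear_combination (-(1:ℂ)/2) * k
      have e2 : y * (5 * y + 3 * x) = 0 := by
        have k : (x * χ0 1 0 0 + y * χ1 1 0 0) * (x * χ0 1 1 1 + y * χ1 1 1 1)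
            - (x * χ0 1 0 1 + y * χ1 1 0 1) * (x * χ0 1 1 0 + y * χ1 1 1 0) = 0 := by
          rw [h 1 0 0, h 1 1 1, h 1 0 1, h 1 1 0]; ring
        simp [χ0, χ1, ket] at k
        linear_combination (1/2 : ℂ) * k
      obtain ⟨hx, hy⟩ := solve53 x y e1 e2
      exact key hx hy
end
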